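/- The 1-Lipschitz saturation M_{S_1} := {h ∈ O_{X,x}^p : h_D ∈ integral closure of M_D} is an O_{X,x}-submodule of O_{X,x}^p. -/

import Mathlib

/-!
Doubling turns multiplication by `α` into multiplication by the diagonal `(φ1 α, φ2 α)`,
which preserves `M_D` because it sends the double of `m` to the double of `α • m`. Pulling back
along a curve is multiplicative, so a pointwise multiplier preserving a module also preserves
its curve-criterion closure; closure under addition is immediate.
-/

/-- The double of `h ∈ R^p` along the two "pullback" homomorphisms `φ1, φ2 : R →+* S`. -/
def Lip.double {R S : Type*} [CommRing R] [CommRing S] {p : ℕ}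
    (φ1 φ2 : R →+* S) (h : Fin p → R) : Fin p ⊕ Fin p → S :=
  Sum.elim (fun i => φ1 (h i)) (fun i => φ2 (h i))

/-- The integral closure of a submodule `N ⊆ A^ι` by the curve criterion: `h` is in the
closure iff for every analytic curve (modeled as a homomorphism `φ : A →+* ℂ⟦t⟧`), the
pullback `φ*h` lies in the module generated by the pullback of `N`. -/
def Lip.curveCl {A : Type*} [CommRing A] {ι : Type*} (N : Submodule A (ι → A)) :
    Set (ι → A) :=
  {h | ∀ φ : A →+* PowerSeries ℂ,
    (fun i => φ (h i)) ∈
      Submodule.span (PowerSeries ℂ) ((fun m : ι → A => fun i => φ (m i)) '' (N : Set (ι → A)))}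

theorem Submodule.mul_mem_span_of_mul_mem {B Y : Type*} [CommSemiring B] [Semiring Y]
    [Algebra B Y] {T : Set Y} {c : Y} (hc : ∀ y ∈ T, c * y ∈ span B T) {v : Y}
    (hv : v ∈ span B T) : c * v ∈ span B T :=
  (span_le (p := (span B T).comap (LinearMap.mulLeft B c))).mpr hc hv

namespace Lip

section curveCl

variable {A ι : Type*} [CommRing A] {N : Submodule A (ι → A)}

theorem add_mem_curveCl {h h' : ι → A} (hh : h ∈ curveCl N) (hh' : h' ∈ curveCl N) :
    h + h' ∈ curveCl N := fun φ => by
  convert add_mem (hh φ) (hh' φ) using 1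
  exact funext fun i => map_add φ (h i) (h' i)

theorem mul_mem_curveCl {d : ι → A} (hd : ∀ m ∈ N, d * m ∈ N) {h : ι → A}
    (hh : h ∈ curveCl N) : d * h ∈ curveCl N := fun φ => by
  have pullback_mul (f g : ι → A) :
      (fun i => φ ((f * g) i)) = (fun i => φ (f i)) * fun i => φ (g i) :=
    funext fun i => map_mul φ (f i) (g i)
  rw [pullback_mul]
  refine Submodule.mul_mem_span_of_mul_mem ?_ (hh φ)
  rintro _ ⟨m, hm, rfl⟩
  exact Submodule.subset_span ⟨d * m, hd m hm, pullback_mul d m⟩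

end curveCl

section double

variable {R S : Type*} [CommRing R] [CommRing S] {p : ℕ} (φ1 φ2 : R →+* S)

theorem double_add (h h' : Fin p → R) :
    double φ1 φ2 (h + h') = double φ1 φ2 h + double φ1 φ2 h' := by
  funext j; cases j <;> simp [double]

theorem double_smul (α : R) (h : Fin p → R) :
    double φ1 φ2 (α • h) = double φ1 φ2 (fun _ => α) * double φ1 φ2 h := by
  funext j; cases j <;> simp [double]

theorem double_const_mul_mem_span (M : Submodule R (Fin p → R)) (α : R)
    {v : Fin p ⊕ Fin p → S} (hv : v ∈ Submodule.span S (double φ1 φ2 '' M)) :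
    double φ1 φ2 (fun _ => α) * v ∈ Submodule.span S (double φ1 φ2 '' M) := by
  refine Submodule.mul_mem_span_of_mul_mem ?_ hv
  rintro _ ⟨m, hm, rfl⟩
  exact Submodule.subset_span ⟨α • m, M.smul_mem α hm, double_smul φ1 φ2 α m⟩

end double

end Lip

theorem lipschitzSaturationOne_submodule_general {R S : Type*} [CommRing R] [CommRing S] {p : ℕ}
    (φ1 φ2 : R →+* S)
    (M : Submodule R (Fin p → R)) (α : R) (h h' : Fin p → R)
    (hh : Lip.double φ1 φ2 h ∈ Lip.curveCl (Submodule.span S (Lip.double φ1 φ2 '' M)))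
    (hh' : Lip.double φ1 φ2 h' ∈ Lip.curveCl (Submodule.span S (Lip.double φ1 φ2 '' M))) :
    Lip.double φ1 φ2 (α • h + h') ∈
      Lip.curveCl (Submodule.span S (Lip.double φ1 φ2 '' M)) := by
  rw [Lip.double_add, Lip.double_smul]
  exact Lip.add_mem_curveCl
    (Lip.mul_mem_curveCl (fun _ => Lip.double_const_mul_mem_span φ1 φ2 M α) hh) hh'

/-- The 1-Lipschitz saturation `M_{S₁} = {h : h_D ∈ closure (M_D)}` is a submodule:
it is closed under the operations `(α, h, h') ↦ α h + h'`. Here `M_D` is the double of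
`M`, and we assume (as holds for `O_X`, `X ⊆ ℂⁿ`) that `φ1 α − φ2 α` lies in the ideal
generated by the `φ1 (z i) − φ2 (z i)` for the coordinates `z`. -/
theorem lipschitzSaturationOne_submodule {R S : Type*} [CommRing R] [CommRing S] {p n : ℕ}
    (φ1 φ2 : R →+* S) (z : Fin n → R)
    (hz : ∀ α : R, φ1 α - φ2 α ∈ Ideal.span (Set.range fun i => φ1 (z i) - φ2 (z i)))
    (M : Submodule R (Fin p → R)) (α : R) (h h' : Fin p → R)
    (hh : Lip.double φ1 φ2 h ∈ Lip.curveCl (Submodule.span S (Lip.double φ1 φ2 '' M)))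
    (hh' : Lip.double φ1 φ2 h' ∈ Lip.curveCl (Submodule.span S (Lip.double φ1 φ2 '' M))) :
    Lip.double φ1 φ2 (α • h + h') ∈
      Lip.curveCl (Submodule.span S (Lip.double φ1 φ2 '' M)) :=
  lipschitzSaturationOne_submodule_general φ1 φ2 M α h h' hh hh'
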